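/- Suppose ψ satisfies sup_{u≥1} ψ(u+v)/ψ(u) < ∞ for all v > 0 and there exists B_r > 0 with ψ(S_k)/ψ(S_{k−1}) ≤ B_r for all k ≥ r, where S_k is an increasing sequence with S_k ≥ 1, S_k → ∞. Then the norms ‖ξ‖_{S_k,ψ,r} = sup_{k≥r}(E|ξ|^{S_k})^{1/S_k}/ψ(S_k) and ‖ξ‖_ψ = sup_{u≥1}(E|ξ|^u)^{1/u}/ψ(u) are equivalent: ‖ξ‖_{S_k,ψ,r} ≤ ‖ξ‖_ψ and ‖ξ‖_ψ ≤ max(C_r, C̃_r) ‖ξ‖_{S_k,ψ,r} with C_r = sup_{k≥r} ψ(S_k)/ψ(S_{k−1}) and C̃_r = sup_{1≤u≤S_r} ψ(S_r)/ψ(u). -/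

import Mathlib

open MeasureTheory Real Filter

noncomputable def Fnorm {Ω : Type*} [MeasurableSpace Ω] (μ : Measure Ω)
    (ψ : ℝ → ℝ) (ξ : Ω → ℝ) : ℝ :=
  ⨆ u : {u : ℝ // 1 ≤ u}, (∫ ω, |ξ ω| ^ u.1 ∂μ) ^ (1 / u.1) / ψ u.1

/-- Membership in the space `F_ψ(Ω)`: all moments of order `u ≥ 1` are finite and the
defining supremum is finite (bounded above). -/
def MemF {Ω : Type*} [MeasurableSpace Ω] (μ : Measure Ω) (ψ : ℝ → ℝ) (ξ : Ω → ℝ) : Prop :=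
  (∀ u : ℝ, 1 ≤ u → Integrable (fun ω => |ξ ω| ^ u) μ) ∧
    BddAbove (Set.range fun u : {u : ℝ // 1 ≤ u} =>
      (∫ ω, |ξ ω| ^ u.1 ∂μ) ^ (1 / u.1) / ψ u.1)

lemma moment_eq {Ω : Type*} [MeasurableSpace Ω] (μ : Measure Ω) (ξ : Ω → ℝ) {w : ℝ} (hw : 0 < w)
    (hint : Integrable (fun ω => |ξ ω| ^ w) μ) :
    (∫ ω, |ξ ω| ^ w ∂μ) ^ (1 / w)
      = (eLpNorm (fun ω => |ξ ω|) (ENNReal.ofReal w) μ).toReal := by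
  rw [eLpNorm_eq_eLpNorm' (by simp [hw]) ENNReal.ofReal_ne_top,
    ENNReal.toReal_ofReal hw.le, eLpNorm',
    integral_eq_lintegral_of_nonneg_ae (Eventually.of_forall fun ω => by positivity)
      hint.aestronglyMeasurable, ← ENNReal.toReal_rpow]
  congr 2
  refine lintegral_congr fun ω => ?_
  rw [← ENNReal.ofReal_rpow_of_nonneg (abs_nonneg _) hw.le,
    Real.enorm_eq_ofReal (abs_nonneg _)]

lemma moment_fin {Ω : Type*} [MeasurableSpace Ω] (μ : Measure Ω) (ξ : Ω → ℝ) {w : ℝ} (hw : 0 < w)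
    (hint : Integrable (fun ω => |ξ ω| ^ w) μ) :
    eLpNorm (fun ω => |ξ ω|) (ENNReal.ofReal w) μ ≠ ⊤ := by
  rw [eLpNorm_eq_eLpNorm' (by simp [hw]) ENNReal.ofReal_ne_top,
    ENNReal.toReal_ofReal hw.le, eLpNorm']
  have h := hint.2
  rw [hasFiniteIntegral_def] at h
  refine (ENNReal.rpow_lt_top_of_nonneg (by positivity) ?_).ne
  refine ne_of_lt (lt_of_le_of_lt (le_of_eq (lintegral_congr fun ω => ?_)) h)
  rw [Real.enorm_eq_ofReal (abs_nonneg _), ENNReal.ofReal_rpow_of_nonneg (abs_nonneg _) hw.le,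
    Real.enorm_eq_ofReal (by positivity)]

lemma lyapunov {Ω : Type*} [MeasurableSpace Ω] (μ : Measure Ω) [IsProbabilityMeasure μ]
    (ξ : Ω → ℝ) (hint : ∀ u : ℝ, 1 ≤ u → Integrable (fun ω => |ξ ω| ^ u) μ)
    {u v : ℝ} (hu : 1 ≤ u) (huv : u ≤ v) :
    (∫ ω, |ξ ω| ^ u ∂μ) ^ (1 / u) ≤ (∫ ω, |ξ ω| ^ v ∂μ) ^ (1 / v) := by
  have hu0 : (0:ℝ) < u := lt_of_lt_of_le one_pos hu
  have hv0 : (0:ℝ) < v := lt_of_lt_of_le hu0 huv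
  rw [moment_eq μ ξ hu0 (hint u hu), moment_eq μ ξ hv0 (hint v (hu.trans huv))]
  refine ENNReal.toReal_mono (moment_fin μ ξ hv0 (hint v (hu.trans huv))) ?_
  refine eLpNorm_le_eLpNorm_of_exponent_le (ENNReal.ofReal_le_ofReal huv) ?_
  have h2 : AEStronglyMeasurable (fun ω => |ξ ω|) μ := by
    simpa [Real.rpow_one] using (hint 1 le_rfl).aestronglyMeasurable
  exact h2

theorem stmt9 {Ω : Type*} [MeasurableSpace Ω] (μ : Measure Ω) [IsProbabilityMeasure μ]
    (ψ : ℝ → ℝ) (hψpos : ∀ u : ℝ, 1 ≤ u → 0 < ψ u)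
    (hψmono : StrictMonoOn ψ (Set.Ici 1)) (hψcont : ContinuousOn ψ (Set.Ici 1))
    (hψtop : Tendsto ψ atTop atTop)
    (hψratio : ∀ v : ℝ, 0 < v →
      BddAbove (Set.range fun u : {u : ℝ // 1 ≤ u} => ψ (u.1 + v) / ψ u.1))
    (S : ℕ → ℝ) (hS1 : ∀ k, 1 ≤ S k) (hSmono : StrictMono S)
    (hStop : Tendsto S atTop atTop)
    (r : ℕ) (B : ℝ) (hB : 0 < B) (hBr : ∀ k, r ≤ k → ψ (S k) / ψ (S (k - 1)) ≤ B)
    (ξ : Ω → ℝ) (hmem : MemF μ ψ ξ) :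
    (⨆ k : {k : ℕ // r ≤ k},
        (∫ ω, |ξ ω| ^ (S k.1) ∂μ) ^ (1 / S k.1) / ψ (S k.1)) ≤ Fnorm μ ψ ξ ∧
    Fnorm μ ψ ξ ≤
      max (⨆ k : {k : ℕ // r ≤ k}, ψ (S k.1) / ψ (S (k.1 - 1)))
          (⨆ u : {u : ℝ // 1 ≤ u ∧ u ≤ S r}, ψ (S r) / ψ u.1) *
        ⨆ k : {k : ℕ // r ≤ k},
          (∫ ω, |ξ ω| ^ (S k.1) ∂μ) ^ (1 / S k.1) / ψ (S k.1) := by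
  obtain ⟨hint, hbdd⟩ := hmem
  haveI : Nonempty {k : ℕ // r ≤ k} := ⟨⟨r, le_rfl⟩⟩
  haveI : Nonempty {u : ℝ // 1 ≤ u} := ⟨⟨1, le_rfl⟩⟩
  haveI : Nonempty {u : ℝ // 1 ≤ u ∧ u ≤ S r} := ⟨⟨1, le_rfl, hS1 r⟩⟩
  set m : ℝ → ℝ := fun w => (∫ ω, |ξ ω| ^ w ∂μ) ^ (1 / w) with hm
  have hFn : Fnorm μ ψ ξ = ⨆ u : {u : ℝ // 1 ≤ u}, m u.1 / ψ u.1 := rfl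
  obtain ⟨b, hb⟩ := hbdd
  have hb' : ∀ u : {u : ℝ // 1 ≤ u}, m u.1 / ψ u.1 ≤ b := fun u => hb (Set.mem_range_self u)
  have hdisc : BddAbove (Set.range fun k : {k : ℕ // r ≤ k} => m (S k.1) / ψ (S k.1)) := by
    refine ⟨b, ?_⟩
    rintro x ⟨k, rfl⟩
    exact hb' ⟨S k.1, hS1 k.1⟩
  have hmnn : ∀ w : ℝ, 0 ≤ m w := fun w =>
    Real.rpow_nonneg (integral_nonneg fun ω => Real.rpow_nonneg (abs_nonneg _) _) _
  have hterm_nonneg : ∀ w : ℝ, 1 ≤ w → 0 ≤ m w / ψ w := fun w hw =>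
    div_nonneg (hmnn w) (hψpos w hw).le
  set N := ⨆ k : {k : ℕ // r ≤ k}, m (S k.1) / ψ (S k.1) with hN
  have hNle : ∀ k : ℕ, r ≤ k → m (S k) / ψ (S k) ≤ N := fun k hk =>
    le_ciSup hdisc (⟨k, hk⟩ : {k : ℕ // r ≤ k})
  have hN0 : 0 ≤ N := le_trans (hterm_nonneg (S r) (hS1 r)) (hNle r le_rfl)
  have hψm : ∀ a c : ℝ, 1 ≤ a → a ≤ c → ψ a ≤ ψ c := fun a c ha hac =>
    hψmono.monotoneOn (Set.mem_Ici.mpr ha) (Set.mem_Ici.mpr (ha.trans hac)) hac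
  constructor
  · rw [hFn]
    exact ciSup_le fun k => le_ciSup ⟨b, hb⟩ (⟨S k.1, hS1 k.1⟩ : {u : ℝ // 1 ≤ u})
  · set C := ⨆ k : {k : ℕ // r ≤ k}, ψ (S k.1) / ψ (S (k.1 - 1)) with hC
    set Ct := ⨆ u : {u : ℝ // 1 ≤ u ∧ u ≤ S r}, ψ (S r) / ψ u.1 with hCt
    have hCbdd : BddAbove (Set.range fun k : {k : ℕ // r ≤ k} => ψ (S k.1) / ψ (S (k.1 - 1))) := by
      refine ⟨B, ?_⟩
      rintro x ⟨k, rfl⟩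
      exact hBr k.1 k.2
    have hCtbdd : BddAbove
        (Set.range fun u : {u : ℝ // 1 ≤ u ∧ u ≤ S r} => ψ (S r) / ψ u.1) := by
      refine ⟨ψ (S r) / ψ 1, ?_⟩
      rintro x ⟨u, rfl⟩
      have h1 : ψ 1 ≤ ψ u.1 := hψm 1 u.1 le_rfl u.2.1
      exact div_le_div_of_nonneg_left (hψpos (S r) (hS1 r)).le (hψpos 1 le_rfl) h1
    have hC0 : 0 ≤ C :=
      le_trans (div_nonneg (hψpos _ (hS1 r)).le (hψpos _ (hS1 _)).le)
        (le_ciSup hCbdd (⟨r, le_rfl⟩ : {k : ℕ // r ≤ k}))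
    have hCt0 : 0 ≤ Ct :=
      le_trans (div_nonneg (hψpos _ (hS1 r)).le (hψpos 1 le_rfl).le)
        (le_ciSup hCtbdd (⟨1, le_rfl, hS1 r⟩ : {u : ℝ // 1 ≤ u ∧ u ≤ S r}))
    rw [hFn]
    refine ciSup_le fun u => ?_
    rcases le_or_gt u.1 (S r) with hur | hur
    · have h1 : m u.1 ≤ m (S r) := lyapunov μ ξ hint u.2 hur
      have hne1 : ψ u.1 ≠ 0 := (hψpos u.1 u.2).ne'
      have hne2 : ψ (S r) ≠ 0 := (hψpos _ (hS1 r)).ne'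
      calc m u.1 / ψ u.1 ≤ m (S r) / ψ u.1 :=
            (div_le_div_iff_of_pos_right (hψpos u.1 u.2)).mpr h1
        _ = (ψ (S r) / ψ u.1) * (m (S r) / ψ (S r)) := by
            field_simp
        _ ≤ Ct * N :=
            mul_le_mul (le_ciSup hCtbdd (⟨u.1, u.2, hur⟩ : {u : ℝ // 1 ≤ u ∧ u ≤ S r}))
              (hNle r le_rfl) (hterm_nonneg (S r) (hS1 r)) hCt0
        _ ≤ max C Ct * N := mul_le_mul_of_nonneg_right (le_max_right _ _) hN0
    · obtain ⟨k₀, hk₀⟩ := (hStop.eventually_ge_atTop u.1).exists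
      classical
      have hex : ∃ k, u.1 ≤ S k := ⟨k₀, hk₀⟩
      set k := Nat.find hex with hk
      have hku : u.1 ≤ S k := Nat.find_spec hex
      have hrk : r < k := by
        by_contra h
        push_neg at h
        exact absurd (hku.trans (hSmono.monotone h)) (not_le.mpr hur)
      have hk1 : k - 1 < k := Nat.sub_lt (lt_of_le_of_lt (Nat.zero_le r) hrk) one_pos
      have hlt : S (k - 1) < u.1 := by
        by_contra h
        push_neg at h
        exact Nat.find_min hex hk1 h
      have hrk1 : r ≤ k - 1 := Nat.le_pred_of_lt hrk
      have hψle : ψ (S (k - 1)) ≤ ψ u.1 := hψm _ _ (hS1 _) hlt.le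
      have hne1 : ψ (S k) ≠ 0 := (hψpos _ (hS1 _)).ne'
      have hne2 : ψ (S (k - 1)) ≠ 0 := (hψpos _ (hS1 _)).ne'
      calc m u.1 / ψ u.1 ≤ m (S k) / ψ (S (k - 1)) :=
            div_le_div₀ (hmnn _) (lyapunov μ ξ hint u.2 hku) (hψpos _ (hS1 _)) hψle
        _ = (ψ (S k) / ψ (S (k - 1))) * (m (S k) / ψ (S k)) := by
            field_simp
        _ ≤ C * N :=
            mul_le_mul (le_ciSup hCbdd (⟨k, hrk.le⟩ : {k : ℕ // r ≤ k}))
              (hNle k hrk.le) (hterm_nonneg _ (hS1 _)) hC0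
        _ ≤ max C Ct * N := mul_le_mul_of_nonneg_right (le_max_left _ _) hN0
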